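/- arXiv:2007.01175 — 2 statements merged into one kernel-verified Lean document; each statement's English description precedes it below -/
import Mathlib

section
/- Define, for a finite set X and k ≤ n, the Stirling operator of the second kind S(n,k) acting on symmetric functions f : X^n → ℝ by (S(n,k)f)(x₁,…,x_k) = Σ_{λ ∈ UP(n,k)} (D_λ f)(x₁,…,x_k), where the sum is over unordered partitions λ = {λ₁,…,λ_k} of {1,…,n} into k nonempty blocks and D_λ f is the symmetrization in (y₁,…,y_k) of the function obtained from f by substituting y_i for each variable x_j with j ∈ λ_i. Then for every finitely supported signed measure ω on X and every symmetric f : X^n → ℝ, ⟨ω^{⊗n}, f⟩ = Σ_{k=1}^{n} ⟨(ω)_k, S(n,k)f⟩. -/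
open Finset

section Defs

variable {X : Type*} [Fintype X] [DecidableEq X]

/-- The falling factorial measure `(ω)_n` on `X^n`, given by the density
`(ω)_n(y₁,…,y_n) = ω(y₁)(ω(y₂)−δ_{y₁}(y₂))⋯(ω(y_n)−δ_{y₁}(y_n)−⋯−δ_{y_{n−1}}(y_n))`. -/
noncomputable def ff (ω : X → ℝ) : (n : ℕ) → (Fin n → X) → ℝ
  | 0 => fun _ => 1
  | n + 1 => fun y =>
      ff ω n (fun i => y i.castSucc) *
        (ω (y (Fin.last n)) - ∑ i : Fin n, if y i.castSucc = y (Fin.last n) then (1 : ℝ) else 0)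

/-- Dirac measure at `x`. -/
noncomputable def diracMeas (x : X) : X → ℝ := fun a => if a = x then 1 else 0

/-- The measure `δ_{x₁}+⋯+δ_{x_k}` of a multiset `[x₁,…,x_k]`. -/
noncomputable def msMeas {k : ℕ} (x : Fin k → X) : X → ℝ :=
  fun a => ((Finset.univ.filter (fun i => x i = a)).card : ℝ)

/-- Integration `⟨μ, f⟩` of a function against a measure on `X^n`. -/
noncomputable def pairing (n : ℕ) (μ f : (Fin n → X) → ℝ) : ℝ :=
  ∑ y : Fin n → X, μ y * f y

/-- Symmetrization of a function/measure on `X^n`. -/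
noncomputable def symmFun (n : ℕ) (μ : (Fin n → X) → ℝ) : (Fin n → X) → ℝ :=
  fun y => (∑ π : Equiv.Perm (Fin n), μ (y ∘ π)) / n.factorial

/-- Tensor product of measures/functions on `X^k` and `X^m`. -/
noncomputable def tensFun {k m : ℕ} (μ : (Fin k → X) → ℝ) (ν : (Fin m → X) → ℝ) :
    (Fin (k + m) → X) → ℝ :=
  fun y => μ (fun i => y (Fin.castAdd m i)) * ν (fun j => y (Fin.natAdd k j))

/-- Re-indexing along an equality of dimensions. -/
def castFun {m n : ℕ} (h : m = n) (μ : (Fin m → X) → ℝ) : (Fin n → X) → ℝ :=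
  fun y => μ (fun i => y (Fin.cast h i))

/-- The product measure `ω^{⊗n}` (and likewise the tensor power `ξ^{⊗n}` of a function). -/
noncomputable def prodMeas (ω : X → ℝ) (n : ℕ) : (Fin n → X) → ℝ :=
  fun y => ∏ i, ω (y i)

/-- A function on `X^n` is symmetric. -/
def IsSymmFun {n : ℕ} (f : (Fin n → X) → ℝ) : Prop :=
  ∀ (π : Equiv.Perm (Fin n)) (y : Fin n → X), f (y ∘ π) = f y

end Defs

/-- The set of surjections `Fin n → Fin k`; these correspond to set partitions of
`{1,…,n}` into `k` nonempty blocks together with an ordering of the blocks. -/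
noncomputable def surjs (n k : ℕ) : Finset (Fin n → Fin k) :=
  Finset.univ.filter (fun g => Function.Surjective g)

/-- Cardinality of the fiber `g⁻¹(i)` (the size of block `i`). -/
def fiberCard {n k : ℕ} (g : Fin n → Fin k) (i : Fin k) : ℕ :=
  (Finset.univ.filter (fun j => g j = i)).card

section Ops

variable {X : Type*} [Fintype X] [DecidableEq X]

/-- Stirling operator of the second kind `S(n,k) = Σ_{λ ∈ UP(n,k)} D_λ`:
summing the substitute-and-symmetrize operators over unordered partitions of `{1,…,n}`
into `k` nonempty blocks is the same as summing `f(y ∘ g)` over the surjections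
`g : Fin n → Fin k` and dividing by `k!`. -/
noncomputable def Sop (n k : ℕ) (f : (Fin n → X) → ℝ) : (Fin k → X) → ℝ :=
  fun y => (∑ g ∈ surjs n k, f (y ∘ g)) / k.factorial

/-- Unsigned Stirling operator of the first kind
`c(n,k) = Σ_{λ={λ₁,…,λ_k} ∈ UP(n,k)} (|λ₁|−1)!⋯(|λ_k|−1)! · D_λ`. -/
noncomputable def cop (n k : ℕ) (f : (Fin n → X) → ℝ) : (Fin k → X) → ℝ :=
  fun y => (∑ g ∈ surjs n k, (∏ i : Fin k, ((fiberCard g i - 1).factorial : ℝ)) * f (y ∘ g)) /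
    k.factorial

/-- Stirling operator of the first kind `s(n,k) = (−1)^{n−k} c(n,k)`. -/
noncomputable def sop (n k : ℕ) (f : (Fin n → X) → ℝ) : (Fin k → X) → ℝ :=
  fun y => (-1 : ℝ) ^ (n - k) * cop n k f y

/-- Lah operator `L(n,k) = Σ_{λ={λ₁,…,λ_k} ∈ UP(n,k)} |λ₁|!⋯|λ_k|! · D_λ`. -/
noncomputable def Lop (n k : ℕ) (f : (Fin n → X) → ℝ) : (Fin k → X) → ℝ :=
  fun y => (∑ g ∈ surjs n k, (∏ i : Fin k, ((fiberCard g i).factorial : ℝ)) * f (y ∘ g)) /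
    k.factorial

end Ops

/-! Peel off the last coordinate. On the measure side, splitting `ω a` as
`(ω a - Σ_c δ_{y_c}(a)) + Σ_c δ_{y_c}(a)` shows that `(ω)_k ⊗ ω` is `(ω)_{k+1}` plus the images
of `(ω)_k` under the maps `y ↦ (y, y_c)`.
On the combinatorial side, a surjection `Fin (n+1) → Fin (k+1)` either restricts to a surjection
on `Fin n`, with `n+1` sent anywhere, or sends `n+1` alone to a block `c`, which the symmetry of
`(ω)_{k+1}` lets us relabel as the last one. These two pieces match, and give the recurrence
`S(n+1,k+1) = (k+1) S(n,k+1) + S(n,k)`, so the expansion follows by induction on `n`. -/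

theorem sum_fun_fin_succ {α M : Type*} [Fintype α] [AddCommMonoid M] {n : ℕ}
    (F : (Fin (n + 1) → α) → M) :
    ∑ z, F z = ∑ y : Fin n → α, ∑ a, F (Fin.snoc y a) := by
  rw [← (Fin.snocEquiv fun _ => α).sum_comp, Fintype.sum_prod_type, sum_comm]
  rfl

section Surjections

open Function

theorem not_surjective_and_surjective_snoc_iff {n k : ℕ} (g : Fin n → Fin (k + 1))
    (c : Fin (k + 1)) :
    (¬ Surjective g ∧ Surjective (Fin.snoc g c : Fin (n + 1) → Fin (k + 1))) ↔
      ∃ h : Fin n → Fin k, Surjective h ∧ c.succAbove ∘ h = g := by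
  simp only [← Set.range_eq_univ, Fin.range_snoc]
  constructor
  · rintro ⟨hg, hgc⟩
    have hc : c ∉ Set.range g := fun hc => hg (by rwa [Set.insert_eq_of_mem hc] at hgc)
    have hrange : Set.range g = Set.range c.succAbove := by
      rw [Fin.range_succAbove, Set.compl_eq_univ_sdiff, ← hgc, Set.insert_sdiff_self_of_notMem hc]
    obtain ⟨h, rfl⟩ := Set.range_subset_range_iff_exists_comp.mp hrange.subset
    refine ⟨h, (Fin.succAbove_right_injective (p := c)).image_injective ?_, rfl⟩
    rwa [← Set.range_comp, Set.image_univ]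
  · rintro ⟨h, hh, rfl⟩
    rw [Set.range_comp, hh, Set.image_univ, Fin.range_succAbove, Set.insert_eq,
      Set.union_compl_self]
    exact ⟨by simp, rfl⟩

theorem sum_surjs_succ {M : Type*} [AddCommMonoid M] (n k : ℕ)
    (F : (Fin (n + 1) → Fin (k + 1)) → M) :
    ∑ g ∈ surjs (n + 1) (k + 1), F g =
      ∑ g ∈ surjs n (k + 1), ∑ c, F (Fin.snoc g c) +
        ∑ c, ∑ h ∈ surjs n k, F (Fin.snoc (c.succAbove ∘ h) c) := by
  rw [surjs, sum_filter, sum_fun_fin_succ, ← sum_filter_add_sum_filter_not univ Surjective]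
  congr 1
  · refine sum_congr rfl fun g hg => sum_congr rfl fun c _ => if_pos ?_
    intro i
    obtain ⟨j, hj⟩ := (mem_filter.mp hg).2 i
    exact ⟨j.castSucc, by simpa using hj⟩
  · rw [sum_comm]
    refine sum_congr rfl fun c _ => ?_
    have hset : (univ.filter fun g : Fin n → Fin (k + 1) =>
        ¬ Surjective g ∧ Surjective (Fin.snoc g c : Fin (n + 1) → Fin (k + 1))) =
        (surjs n k).image (c.succAbove ∘ ·) := by
      ext g
      simp [not_surjective_and_surjective_snoc_iff, surjs]
    rw [← sum_filter, filter_filter, hset,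
      sum_image fun _ _ _ _ h => Fin.succAbove_right_injective.comp_left h]

theorem surjs_eq_empty_of_lt {n k : ℕ} (h : n < k) : surjs n k = ∅ :=
  eq_empty_of_forall_notMem fun g hg => by
    have := Fintype.card_le_of_surjective g (mem_filter.mp hg).2
    simp only [Fintype.card_fin] at this
    omega

theorem surjs_zero_right {n : ℕ} (hn : 0 < n) : surjs n 0 = ∅ :=
  eq_empty_of_forall_notMem fun g _ => (g ⟨0, hn⟩).elim0

theorem exists_perm_comp_snoc_castSucc {k : ℕ} (c : Fin (k + 1)) :
    ∃ σ : Equiv.Perm (Fin (k + 1)), ∀ {n : ℕ} (h : Fin n → Fin k),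
      σ ∘ Fin.snoc (Fin.castSucc ∘ h) (Fin.last k) = Fin.snoc (c.succAbove ∘ h) c := by
  refine ⟨finSuccEquivLast.trans (finSuccEquiv' c).symm, fun h => funext fun j => ?_⟩
  cases j using Fin.lastCases <;> simp

end Surjections

section Measures

variable {X : Type*} [Fintype X]

theorem pairing_comp_perm {k : ℕ} {μ : (Fin k → X) → ℝ} (hμ : IsSymmFun μ)
    (σ : Equiv.Perm (Fin k)) (F : (Fin k → X) → ℝ) :
    pairing k μ (fun y => F (y ∘ σ)) = pairing k μ F := by
  refine Fintype.sum_equiv (σ.symm.arrowCongr (Equiv.refl X)) _ _ fun y => ?_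
  change μ y * F (y ∘ σ) = μ (y ∘ σ) * F (y ∘ σ)
  rw [hμ]

noncomputable def integrateLast (ω : X → ℝ) {n : ℕ} (f : (Fin (n + 1) → X) → ℝ) :
    (Fin n → X) → ℝ :=
  fun x => ∑ a, ω a * f (Fin.snoc x a)

theorem pairing_prodMeas_succ (ω : X → ℝ) {n : ℕ} (f : (Fin (n + 1) → X) → ℝ) :
    pairing (n + 1) (prodMeas ω (n + 1)) f = pairing n (prodMeas ω n) (integrateLast ω f) := by
  simp only [pairing, prodMeas, integrateLast, sum_fun_fin_succ, mul_sum,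
    Fin.prod_univ_castSucc, Fin.snoc_castSucc, Fin.snoc_last, mul_assoc]

end Measures

section FallingFactorial

variable {X : Type*} [DecidableEq X]

theorem card_filter_snoc_eq {k : ℕ} (y : Fin k → X) (a v : X) :
    (univ.filter fun i => (Fin.snoc y a : Fin (k + 1) → X) i = v).card =
      (univ.filter fun i => y i = v).card + if a = v then 1 else 0 := by
  simp only [card_filter, Fin.sum_univ_castSucc, Fin.snoc_castSucc, Fin.snoc_last]

theorem ff_snoc (ω : X → ℝ) {k : ℕ} (y : Fin k → X) (a : X) :
    ff ω (k + 1) (Fin.snoc y a) = ff ω k y * (ω a - msMeas y a) := by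
  simp [ff, msMeas, sum_boole]

variable [Fintype X]

theorem sum_msMeas_mul {k : ℕ} (y : Fin k → X) (F : X → ℝ) :
    ∑ a, msMeas y a * F a = ∑ c, F (y c) := by
  simp only [msMeas, card_filter, Nat.cast_sum, sum_mul]
  rw [sum_comm]
  simp

theorem ff_eq_prod_descPochhammer (ω : X → ℝ) {k : ℕ} (y : Fin k → X) :
    ff ω k y = ∏ v, (descPochhammer ℝ (univ.filter fun i => y i = v).card).eval (ω v) := by
  induction k with
  | zero => simp [ff]
  | succ k ih =>
    rw [← Fin.snoc_init_self y, ff_snoc, ih]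
    simp only [card_filter_snoc_eq]
    have step : ∀ (c : ℕ) (v : X),
        (descPochhammer ℝ (c + if y (Fin.last k) = v then 1 else 0)).eval (ω v) =
          (descPochhammer ℝ c).eval (ω v) * if y (Fin.last k) = v then ω v - c else 1 := by
      intro c v
      split_ifs <;> simp [descPochhammer_succ_eval]
    simp only [step, prod_mul_distrib, prod_ite_eq, mem_univ, if_true]
    rfl

theorem ff_isSymmFun (ω : X → ℝ) (k : ℕ) : IsSymmFun (ff ω k) := by
  intro σ y
  simp only [ff_eq_prod_descPochhammer, Function.comp_apply]
  congr! 3 with v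
  exact card_equiv σ (by simp)

theorem pairing_ff_mul_sum (ω : X → ℝ) {k : ℕ} (F : (Fin k → X) → X → ℝ) :
    pairing k (ff ω k) (fun y => ∑ a, ω a * F y a) =
      pairing (k + 1) (ff ω (k + 1)) (fun z => F (Fin.init z) (z (Fin.last k))) +
        ∑ c, pairing k (ff ω k) (fun y => F y (y c)) := by
  simp only [pairing, sum_fun_fin_succ, Fin.init_snoc, Fin.snoc_last, ff_snoc]
  rw [sum_comm (s := univ (α := Fin k)), ← sum_add_distrib]
  refine sum_congr rfl fun y _ => ?_
  rw [← mul_sum, ← sum_msMeas_mul, mul_sum, mul_sum, ← sum_add_distrib]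
  refine sum_congr rfl fun a _ => ?_
  ring

end FallingFactorial

section Expansion

variable {X : Type*} [Fintype X] [DecidableEq X]

noncomputable def surjPairing (ω : X → ℝ) (n k : ℕ) (f : (Fin n → X) → ℝ) : ℝ :=
  ∑ g ∈ surjs n k, pairing k (ff ω k) (fun y => f (y ∘ g))

/- The surjections `Fin (n+1) → Fin k` that stay surjective on `Fin n` (`extendPairing`), and
those in which `n+1` forms a singleton block, labelled last (`newBlockPairing`). -/

noncomputable def extendPairing (ω : X → ℝ) (n k : ℕ) (f : (Fin (n + 1) → X) → ℝ) : ℝ :=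
  ∑ g ∈ surjs n k, ∑ c, pairing k (ff ω k) (fun y => f (y ∘ Fin.snoc g c))

noncomputable def newBlockPairing (ω : X → ℝ) (n k : ℕ) (f : (Fin (n + 1) → X) → ℝ) : ℝ :=
  ∑ g ∈ surjs n k,
    pairing (k + 1) (ff ω (k + 1)) (fun z => f (z ∘ Fin.snoc (Fin.castSucc ∘ g) (Fin.last k)))

theorem surjPairing_integrateLast (ω : X → ℝ) (n k : ℕ) (f : (Fin (n + 1) → X) → ℝ) :
    surjPairing ω n k (integrateLast ω f) = extendPairing ω n k f + newBlockPairing ω n k f := by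
  simp only [surjPairing, extendPairing, newBlockPairing, ← sum_add_distrib]
  refine sum_congr rfl fun g _ => ?_
  simp only [integrateLast, pairing_ff_mul_sum, Fin.comp_snoc, add_comm]
  rfl

theorem surjPairing_succ_succ (ω : X → ℝ) (n k : ℕ) (f : (Fin (n + 1) → X) → ℝ) :
    surjPairing ω (n + 1) (k + 1) f =
      extendPairing ω n (k + 1) f + (k + 1) * newBlockPairing ω n k f := by
  rw [surjPairing, sum_surjs_succ]
  congr 1
  have relabel : ∀ (c : Fin (k + 1)) (h : Fin n → Fin k),
      pairing (k + 1) (ff ω (k + 1)) (fun z => f (z ∘ Fin.snoc (c.succAbove ∘ h) c)) =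
        pairing (k + 1) (ff ω (k + 1))
          (fun z => f (z ∘ Fin.snoc (Fin.castSucc ∘ h) (Fin.last k))) := by
    intro c h
    obtain ⟨σ, hσ⟩ := exists_perm_comp_snoc_castSucc c
    rw [← hσ h]
    exact pairing_comp_perm (ff_isSymmFun ω (k + 1)) σ
      (fun z => f (z ∘ Fin.snoc (Fin.castSucc ∘ h) (Fin.last k)))
  simp only [relabel, sum_const, card_univ, Fintype.card_fin, nsmul_eq_mul, newBlockPairing]
  push_cast
  rfl

theorem pairing_prodMeas_eq_sum_surjPairing (ω : X → ℝ) (n : ℕ) (f : (Fin n → X) → ℝ) :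
    pairing n (prodMeas ω n) f = ∑ k ∈ range (n + 1), surjPairing ω n k f / k.factorial := by
  induction n with
  | zero => simp [pairing, prodMeas, surjPairing, surjs, ff, Function.Surjective]; rfl
  | succ n ih =>
    set A := fun k => extendPairing ω n k f / k.factorial
    set B := fun k => newBlockPairing ω n k f / k.factorial
    have shift : ∑ k ∈ range (n + 1), A k = ∑ k ∈ range (n + 1), A (k + 1) := by
      rw [sum_range_succ', sum_range_succ]
      simp [A, extendPairing, surjs_eq_empty_of_lt (Nat.lt_succ_self n)]
    calc pairing (n + 1) (prodMeas ω (n + 1)) f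
        = ∑ k ∈ range (n + 1), (A k + B k) := by
          simp only [pairing_prodMeas_succ, ih, surjPairing_integrateLast, add_div, A, B]
      _ = ∑ k ∈ range (n + 1), (A (k + 1) + B k) := by
          rw [sum_add_distrib, sum_add_distrib, shift]
      _ = ∑ k ∈ range (n + 1), surjPairing ω (n + 1) (k + 1) f / (k + 1).factorial := by
          refine sum_congr rfl fun k _ => ?_
          simp only [A, B, surjPairing_succ_succ, Nat.factorial_succ]
          push_cast
          field_simp
      _ = ∑ k ∈ range (n + 2), surjPairing ω (n + 1) k f / k.factorial := by
          rw [sum_range_succ' _ (n + 1)]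
          simp [surjPairing, surjs_zero_right (Nat.succ_pos n)]

theorem surjPairing_div_factorial (ω : X → ℝ) (n k : ℕ) (f : (Fin n → X) → ℝ) :
    surjPairing ω n k f / k.factorial = pairing k (ff ω k) (Sop n k f) := by
  simp only [surjPairing, pairing, Sop, sum_div, mul_div_assoc', mul_sum]
  exact sum_comm

end Expansion

theorem stirling_second_kind_expansion_general
    {X : Type*} [Fintype X] [DecidableEq X] {n : ℕ} (hn : 1 ≤ n)
    (ω : X → ℝ) (f : (Fin n → X) → ℝ) :
    pairing n (prodMeas ω n) f = ∑ k ∈ Finset.Icc 1 n, pairing k (ff ω k) (Sop n k f) := by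
  rw [pairing_prodMeas_eq_sum_surjPairing, range_eq_Ico,
    sum_eq_sum_Ico_succ_bot (Nat.succ_pos n), surjPairing, surjs_zero_right hn, sum_empty,
    zero_div, zero_add, Nat.succ_eq_add_one, Ico_add_one_right_eq_Icc]
  exact sum_congr rfl fun k _ => surjPairing_div_factorial ω n k f

/-- For every finitely supported signed measure `ω` on a finite set `X` and
every symmetric `f : X^n → ℝ`, `⟨ω^{⊗n}, f⟩ = Σ_{k=1}^{n} ⟨(ω)_k, S(n,k)f⟩`, where
`S(n,k)` is the Stirling operator of the second kind. -/
theorem stirling_second_kind_expansion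
    {X : Type*} [Fintype X] [DecidableEq X] {n : ℕ} (hn : 1 ≤ n)
    (ω : X → ℝ) (f : (Fin n → X) → ℝ) (hf : IsSymmFun f) :
    pairing n (prodMeas ω n) f = ∑ k ∈ Finset.Icc 1 n, pairing k (ff ω k) (Sop n k f) :=
  stirling_second_kind_expansion_general hn ω f
end

section
/- For all i, n ≥ 1, the Lah operators satisfy Σ_{k=1}^{n} (−1)^{n−k} L(k,i) ∘ L(n,k) = δ_{ni} · Id as operators from symmetric functions on X^n to symmetric functions on X^i. -/
open Finset

/-!
For symmetric `f`, the weight `∏ |g⁻¹(l)|!` of a surjection `g` is the number of permutations `π`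
with `g ∘ π = g`. Writing every `g` as `c ∘ π` with `c` monotone therefore turns `L(n,k) f (y)` into
`n!/k! · ∑ f (y ∘ c)` over the monotone surjections `c : Fin n → Fin k`, i.e. over the partitions
of `{1,…,n}` into `k` intervals. Composing two of these, `L(k,i) (L(n,k) f) (y)` becomes `n!/i!`
times a sum over monotone surjections `e : Fin n → Fin i`, each counted as often as it factors
through a monotone surjection onto `Fin k`. A monotone surjection is determined by its set of cuts
in `Fin (n - 1)`, and `e` factors through `c` iff the cuts of `c` contain those of `e`. So the
alternating sum over `k` is `∑ (-1)^(n - 1 - |T|)` over the supersets `T` of the cuts of `e`,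
which vanishes unless `e` cuts everywhere, that is unless `n = i` and `e = id`.
-/

open Function Equiv

section Sorting

variable {α : Type*} [LinearOrder α] {n : ℕ}

lemma eq_comp_sort_of_monotone {c g : Fin n → α} {π : Perm (Fin n)} (hc : Monotone c)
    (h : c ∘ π = g) : c = g ∘ Tuple.sort g := by
  have hc' : c = g ∘ ⇑π⁻¹ := by rw [← h]; ext; simp
  rw [hc']
  exact Tuple.comp_sort_eq_comp_iff_monotone.mpr (hc' ▸ hc)

/-- In a factorization `g = c ∘ π` with `c` monotone, `c = g ∘ sort g` is forced. -/
def monotoneFactorizationEquiv (g : Fin n → α) :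
    {p : (Fin n → α) × Perm (Fin n) // Monotone p.1 ∧ p.1 ∘ p.2 = g} ≃
      {π : Perm (Fin n) // g ∘ π = g} where
  toFun p := ⟨Tuple.sort g * p.1.2, by
    rw [Perm.coe_mul, ← comp_assoc, ← eq_comp_sort_of_monotone p.2.1 p.2.2, p.2.2]⟩
  invFun π := ⟨(g ∘ Tuple.sort g, (Tuple.sort g)⁻¹ * π), Tuple.monotone_sort g, by
    rw [Perm.coe_mul, comp_assoc, ← comp_assoc (Tuple.sort g : Fin n → Fin n),
      ← Perm.coe_mul, mul_inv_cancel, Perm.coe_one, id_comp, π.2]⟩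
  left_inv p := by
    obtain ⟨⟨c, π⟩, hc, h⟩ := p
    obtain rfl : c = g ∘ Tuple.sort g := eq_comp_sort_of_monotone hc h
    ext1
    simp
  right_inv π := by ext1; simp

variable [Fintype α] [DecidableEq α]

theorem sum_card_stabilizer_smul_eq_factorial_smul {M : Type*} [AddCommMonoid M]
    (F : (Fin n → α) → M) (hF : ∀ g (π : Perm (Fin n)), F (g ∘ π) = F g) :
    ∑ g, Fintype.card {π : Perm (Fin n) // g ∘ π = g} • F g =
      n.factorial • ∑ c with Monotone c, F c := by
  let P : Finset ((Fin n → α) × Perm (Fin n)) := ({c | Monotone c} : Finset _) ×ˢ univ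
  calc ∑ g, Fintype.card {π : Perm (Fin n) // g ∘ π = g} • F g
      = ∑ g, ∑ p ∈ P with p.1 ∘ p.2 = g, F g := by
        refine sum_congr rfl fun g _ => ?_
        rw [sum_const, ← Fintype.card_congr (monotoneFactorizationEquiv g), Fintype.card_subtype]
        congr 2
        ext p
        simp [P]
    _ = ∑ p ∈ P, F (p.1 ∘ p.2) := sum_fiberwise' _ _ F
    _ = n.factorial • ∑ c with Monotone c, F c := by
        rw [sum_product, smul_sum]
        refine sum_congr rfl fun c _ => ?_
        simp [hF, Fintype.card_perm]

end Sorting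

noncomputable def monoSurjs (n k : ℕ) : Finset (Fin n → Fin k) :=
  (surjs n k).filter Monotone

lemma mem_surjs {n k : ℕ} {g : Fin n → Fin k} : g ∈ surjs n k ↔ Surjective g := by
  simp [surjs]

lemma mem_monoSurjs {n k : ℕ} {c : Fin n → Fin k} :
    c ∈ monoSurjs n k ↔ Monotone c ∧ Surjective c := by
  simp [monoSurjs, mem_surjs, and_comm]

lemma card_stabilizer_eq_prod_factorial_fiberCard {n k : ℕ} (g : Fin n → Fin k) :
    Fintype.card {π : Perm (Fin n) // g ∘ π = g} = ∏ l, (fiberCard g l).factorial := by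
  rw [DomMulAct.stabilizer_card]
  simp [fiberCard, Fintype.card_subtype]

section Lah

variable {X : Type*}

lemma Lop_eq_sum_card_stabilizer (n k : ℕ) (f : (Fin n → X) → ℝ) (y : Fin k → X) :
    Lop n k f y = (∑ g ∈ surjs n k,
      (Fintype.card {π : Perm (Fin n) // g ∘ π = g} : ℝ) * f (y ∘ g)) / k.factorial := by
  simp [Lop, card_stabilizer_eq_prod_factorial_fiberCard]

lemma isSymmFun_Lop (n k : ℕ) (f : (Fin n → X) → ℝ) : IsSymmFun (Lop n k f) := by
  intro ρ y
  have hstab (g : Fin n → Fin k) :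
      Fintype.card {π : Perm (Fin n) // (ρ ∘ g) ∘ π = ρ ∘ g} =
        Fintype.card {π : Perm (Fin n) // g ∘ π = g} :=
    Fintype.card_congr (Equiv.subtypeEquivRight fun π => ρ.injective.comp_left.eq_iff)
  rw [Lop_eq_sum_card_stabilizer, Lop_eq_sum_card_stabilizer]
  congr 1
  refine sum_nbij' (ρ ∘ ·) (ρ.symm ∘ ·) ?_ ?_ ?_ ?_ ?_
  · exact fun g hg => mem_surjs.mpr (ρ.surjective.comp (mem_surjs.mp hg))
  · exact fun g hg => mem_surjs.mpr (ρ.symm.surjective.comp (mem_surjs.mp hg))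
  · intro g _; ext; simp
  · intro g _; ext; simp
  · intro g _; rw [hstab]; rfl

lemma Lop_eq_sum_monoSurjs {n : ℕ} (k : ℕ) {f : (Fin n → X) → ℝ} (hf : IsSymmFun f)
    (y : Fin k → X) :
    Lop n k f y = n.factorial * (∑ c ∈ monoSurjs n k, f (y ∘ c)) / k.factorial := by
  have key := sum_card_stabilizer_smul_eq_factorial_smul (fun g : Fin n → Fin k =>
      if Surjective g then f (y ∘ g) else 0)
    (fun g π => by simp only [EquivLike.surjective_comp, ← comp_assoc, hf π (y ∘ g)])
  simp only [nsmul_eq_mul, mul_ite, mul_zero, ← sum_filter] at key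
  rw [Lop_eq_sum_card_stabilizer]
  congr 1
  convert key using 3 <;> ext c <;> simp [mem_surjs, mem_monoSurjs]

end Lah

lemma Monotone.of_comp_surjective {α β γ : Type*} [LinearOrder α] [LinearOrder β] [Preorder γ]
    {d : β → γ} {c : α → β} (hc : Monotone c) (hcs : Surjective c) (h : Monotone (d ∘ c)) :
    Monotone d := by
  intro a b hab
  obtain ⟨p, rfl⟩ := hcs a
  obtain ⟨q, rfl⟩ := hcs b
  rcases le_total p q with hpq | hqp
  · exact h hpq
  · rw [le_antisymm hab (hc hqp)]

lemma comp_mem_monoSurjs {n k i : ℕ} {d : Fin k → Fin i} {c : Fin n → Fin k}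
    (hd : d ∈ monoSurjs k i) (hc : c ∈ monoSurjs n k) : d ∘ c ∈ monoSurjs n i := by
  rw [mem_monoSurjs] at *
  exact ⟨hd.1.comp hc.1, hd.2.comp hc.2⟩

noncomputable def finerMonoSurjs {n i : ℕ} (k : ℕ) (e : Fin n → Fin i) :
    Finset (Fin n → Fin k) :=
  (monoSurjs n k).filter fun c => ∀ p q, c p = c q → e p = e q

lemma sum_monoSurjs_sum_monoSurjs_comp {M : Type*} [AddCommMonoid M] {n k i : ℕ}
    (F : (Fin n → Fin i) → M) :
    ∑ d ∈ monoSurjs k i, ∑ c ∈ monoSurjs n k, F (d ∘ c) =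
      ∑ e ∈ monoSurjs n i, #(finerMonoSurjs k e) • F e := by
  have hfiber (e : Fin n → Fin i) (he : e ∈ monoSurjs n i) :
      #((monoSurjs k i ×ˢ monoSurjs n k).filter fun p => p.1 ∘ p.2 = e) =
        #(finerMonoSurjs k e) := by
    refine card_bij (fun p _ => p.2) ?_ ?_ ?_
    · simp only [mem_filter, mem_product, finerMonoSurjs]
      rintro ⟨d, c⟩ ⟨⟨-, hc⟩, rfl⟩
      exact ⟨hc, fun p q h => congrArg d h⟩
    · simp only [mem_filter, mem_product, mem_monoSurjs]
      rintro ⟨d, c⟩ ⟨⟨-, -, hc⟩, hdc⟩ ⟨d', c'⟩ ⟨-, hdc'⟩ rfl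
      simp only [Prod.mk.injEq, and_true]
      exact hc.injective_comp_right (hdc.trans hdc'.symm)
    · simp only [finerMonoSurjs, mem_filter, mem_product, mem_monoSurjs, exists_prop]
      rintro c ⟨⟨hcm, hcs⟩, hce⟩
      have hdc : (e ∘ surjInv hcs) ∘ c = e :=
        funext fun p => hce _ _ (surjInv_eq hcs (c p))
      refine ⟨(e ∘ surjInv hcs, c), ⟨⟨⟨?_, ?_⟩, hcm, hcs⟩, hdc⟩, rfl⟩
      · exact hcm.of_comp_surjective hcs (by rw [hdc]; exact (mem_monoSurjs.mp he).1)
      · exact Surjective.of_comp (hdc ▸ (mem_monoSurjs.mp he).2)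
  rw [← sum_product', ← sum_fiberwise_of_maps_to' (t := monoSurjs n i)
    (fun p hp => comp_mem_monoSurjs (mem_product.mp hp).1 (mem_product.mp hp).2)]
  refine sum_congr rfl fun e he => ?_
  rw [sum_const, hfiber e he]

lemma Lop_Lop_eq_sum_finerMonoSurjs {X : Type*} {n : ℕ} (k i : ℕ) {f : (Fin n → X) → ℝ}
    (hf : IsSymmFun f) (y : Fin i → X) :
    Lop k i (Lop n k f) y = n.factorial *
      (∑ e ∈ monoSurjs n i, (#(finerMonoSurjs k e) : ℝ) * f (y ∘ e)) / i.factorial := by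
  calc Lop k i (Lop n k f) y
      = k.factorial * (∑ d ∈ monoSurjs k i,
          n.factorial * (∑ c ∈ monoSurjs n k, f (y ∘ d ∘ c)) / k.factorial) / i.factorial := by
        simp_rw [Lop_eq_sum_monoSurjs i (isSymmFun_Lop n k f), Lop_eq_sum_monoSurjs k hf]
        rfl
    _ = n.factorial * (∑ d ∈ monoSurjs k i, ∑ c ∈ monoSurjs n k, f (y ∘ d ∘ c)) /
          i.factorial := by
        rw [← sum_div, ← mul_sum]
        field_simp
    _ = _ := by
        rw [sum_monoSurjs_sum_monoSurjs_comp (fun e => f (y ∘ e))]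
        simp [nsmul_eq_mul]

lemma Fin.exists_apply_eq_of_steps_le_one {m : ℕ} (f : Fin (m + 1) → ℕ) (h0 : f 0 = 0)
    (hstep : ∀ q : Fin m, f q.succ ≤ f q.castSucc + 1) {v : ℕ} (hv : v ≤ f (Fin.last m)) :
    ∃ p, f p = v := by
  induction m with
  | zero =>
    rw [Fin.last_zero, h0] at hv
    exact ⟨0, by omega⟩
  | succ m ih =>
    by_cases hv' : v ≤ f (Fin.last m).castSucc
    · obtain ⟨p, hp⟩ := ih (f ∘ Fin.castSucc) h0
        (fun q => by have := hstep q.castSucc; rw [Fin.succ_castSucc] at this; exact this) hv'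
      exact ⟨p.castSucc, hp⟩
    · have := hstep (Fin.last m)
      rw [Fin.succ_last] at this
      change f (Fin.last (m + 1)) ≤ _ at this
      exact ⟨Fin.last (m + 1), by omega⟩

lemma card_filter_le_eq_card_filter_lt_add {α : Type*} [LinearOrder α] (S : Finset α) (q : α) :
    #{t ∈ S | t ≤ q} = #{t ∈ S | t < q} + if q ∈ S then 1 else 0 := by
  have : {t ∈ S | t ≤ q} = {t ∈ S | t < q} ∪ {t ∈ S | t = q} := by
    ext t; simp [le_iff_lt_or_eq, and_or_left]
  rw [this, card_union_of_disjoint (disjoint_filter.mpr fun t _ h h' => h.ne h'), filter_eq']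
  split_ifs <;> simp

section Cuts

variable {m k : ℕ}

def cutSet (c : Fin (m + 1) → Fin k) : Finset (Fin m) :=
  {q | c q.castSucc ≠ c q.succ}

lemma val_succ_eq_val_castSucc_add {c : Fin (m + 1) → Fin k} (hc : c ∈ monoSurjs (m + 1) k)
    (q : Fin m) : (c q.succ : ℕ) = c q.castSucc + if q ∈ cutSet c then 1 else 0 := by
  rw [mem_monoSurjs] at hc
  have hle : c q.castSucc ≤ c q.succ := hc.1 Fin.castSucc_lt_succ.le
  by_cases hq : c q.castSucc = c q.succ
  · simp [cutSet, hq]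
  · rw [if_pos (by simpa [cutSet] using hq)]
    have hlt : (c q.castSucc : ℕ) < c q.succ := Fin.lt_def.mp (lt_of_le_of_ne hle hq)
    -- a jump by two or more would skip the value `c q.castSucc + 1`
    by_contra hjump
    obtain ⟨a, ha⟩ := hc.2 ⟨c q.castSucc + 1, by have := (c q.succ).2; omega⟩
    rcases le_or_gt a q.castSucc with haq | haq
    · have := Fin.le_def.mp (ha ▸ hc.1 haq)
      dsimp only at this
      omega
    · have := Fin.le_def.mp (ha ▸ hc.1 (Fin.castSucc_lt_iff_succ_le.mp haq))
      dsimp only at this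
      omega

lemma val_eq_card_cutSet {c : Fin (m + 1) → Fin k} (hc : c ∈ monoSurjs (m + 1) k)
    (p : Fin (m + 1)) : (c p : ℕ) = #{t ∈ cutSet c | t.succ ≤ p} := by
  induction p using Fin.induction with
  | zero =>
    obtain ⟨a, ha⟩ := (mem_monoSurjs.mp hc).2 ⟨0, (c 0).pos⟩
    have := Fin.le_def.mp (ha ▸ (mem_monoSurjs.mp hc).1 (Fin.zero_le a))
    dsimp only at this
    rw [filter_eq_empty_iff.mpr fun t _ => (Fin.succ_pos t).not_ge, card_empty]
    omega
  | succ q ih =>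
    rw [val_succ_eq_val_castSucc_add hc, ih]
    simp only [Fin.succ_le_castSucc_iff, Fin.succ_le_succ_iff]
    exact (card_filter_le_eq_card_filter_lt_add _ q).symm

lemma eq_iff_forall_cutSet {c : Fin (m + 1) → Fin k} (hc : c ∈ monoSurjs (m + 1) k)
    (p p' : Fin (m + 1)) : c p = c p' ↔ ∀ t ∈ cutSet c, (t.succ ≤ p ↔ t.succ ≤ p') := by
  constructor
  · intro h t ht
    have hlt : c t.castSucc < c t.succ :=
      lt_of_le_of_ne ((mem_monoSurjs.mp hc).1 Fin.castSucc_lt_succ.le) (by simpa [cutSet] using ht)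
    have hmono := (mem_monoSurjs.mp hc).1
    constructor <;> intro hle <;> by_contra hlt' <;>
      exact (hlt.trans_le (hmono hle)).not_ge (h ▸ hmono (Fin.le_castSucc_iff.mpr (not_le.mp hlt')))
  · intro h
    rw [Fin.ext_iff, val_eq_card_cutSet hc, val_eq_card_cutSet hc]
    congr 1
    exact filter_congr h

lemma card_cutSet_add_one {c : Fin (m + 1) → Fin k} (hc : c ∈ monoSurjs (m + 1) k) :
    #(cutSet c) + 1 = k := by
  have hlast := val_eq_card_cutSet hc (Fin.last m)
  rw [filter_true_of_mem fun t _ => Fin.le_last _] at hlast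
  obtain ⟨a, ha⟩ := (mem_monoSurjs.mp hc).2 ⟨k - 1, by have := (c 0).pos; omega⟩
  have := Fin.le_def.mp (ha ▸ (mem_monoSurjs.mp hc).1 (Fin.le_last a))
  dsimp only at this
  have := (c (Fin.last m)).2
  omega

lemma cutSet_subset_cutSet_iff {i : ℕ} {c : Fin (m + 1) → Fin k} {e : Fin (m + 1) → Fin i}
    (hc : c ∈ monoSurjs (m + 1) k) (he : e ∈ monoSurjs (m + 1) i) :
    cutSet e ⊆ cutSet c ↔ ∀ p q, c p = c q → e p = e q := by
  constructor
  · intro hsub p q hpq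
    rw [eq_iff_forall_cutSet hc] at hpq
    rw [eq_iff_forall_cutSet he]
    exact fun t ht => hpq t (hsub ht)
  · intro h t
    simp only [cutSet, mem_filter, mem_univ, true_and]
    exact mt (h _ _)

lemma exists_mem_monoSurjs_cutSet_eq (T : Finset (Fin m)) :
    ∃ c ∈ monoSurjs (m + 1) (#T + 1), cutSet c = T := by
  set c : Fin (m + 1) → Fin (#T + 1) :=
    fun p => ⟨#{t ∈ T | t.succ ≤ p}, Nat.lt_succ_of_le (card_filter_le _ _)⟩ with hc_def
  have hcut : cutSet c = T := by
    ext q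
    have := card_filter_le_eq_card_filter_lt_add T q
    simp only [cutSet, mem_filter, mem_univ, true_and, hc_def, ne_eq, Fin.mk.injEq,
      Fin.succ_le_castSucc_iff, Fin.succ_le_succ_iff, this]
    split_ifs <;> simp_all
  refine ⟨c, mem_monoSurjs.mpr ⟨fun p p' hpp' => ?_, fun v => ?_⟩, hcut⟩
  · exact card_le_card (monotone_filter_right _ fun t _ h => h.trans hpp')
  · have hstep (q : Fin m) : (c q.succ : ℕ) ≤ c q.castSucc + 1 := by
      simp only [hc_def, Fin.succ_le_castSucc_iff, Fin.succ_le_succ_iff,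
        card_filter_le_eq_card_filter_lt_add]
      split_ifs <;> omega
    have hlast : (c (Fin.last m) : ℕ) = #T := by
      simp only [hc_def, filter_true_of_mem fun t _ => Fin.le_last _]
    obtain ⟨p, hp⟩ := Fin.exists_apply_eq_of_steps_le_one (fun p => (c p : ℕ))
      (by simp [hc_def]) hstep (v := v) (by have := v.2; omega)
    exact ⟨p, Fin.ext hp⟩

end Cuts

lemma card_finerMonoSurjs {m i : ℕ} (k : ℕ) {e : Fin (m + 1) → Fin i}
    (he : e ∈ monoSurjs (m + 1) i) :
    #(finerMonoSurjs k e) = #{T : Finset (Fin m) | cutSet e ⊆ T ∧ #T + 1 = k} := by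
  refine card_bij (fun c _ => cutSet c) ?_ ?_ ?_
  · intro c hc
    rw [finerMonoSurjs, mem_filter] at hc
    simp only [mem_filter, mem_univ, true_and]
    exact ⟨(cutSet_subset_cutSet_iff hc.1 he).mpr hc.2, card_cutSet_add_one hc.1⟩
  · intro c hc c' hc' h
    have hc := (mem_filter.mp hc).1
    have hc' := (mem_filter.mp hc').1
    funext p
    rw [Fin.ext_iff, val_eq_card_cutSet hc, val_eq_card_cutSet hc', h]
  · intro T hT
    simp only [mem_filter, mem_univ, true_and] at hT
    obtain ⟨hsub, rfl⟩ := hT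
    obtain ⟨c, hc, hcT⟩ := exists_mem_monoSurjs_cutSet_eq T
    exact ⟨c, mem_filter.mpr ⟨hc, (cutSet_subset_cutSet_iff hc he).mp (hcT.symm ▸ hsub)⟩, hcT⟩

lemma sum_neg_one_pow_card_supersets {m : ℕ} (S : Finset (Fin m)) :
    ∑ k ∈ Icc 1 (m + 1), (-1 : ℤ) ^ (m + 1 - k) * #{T : Finset (Fin m) | S ⊆ T ∧ #T + 1 = k} =
      if S = univ then 1 else 0 := by
  calc ∑ k ∈ Icc 1 (m + 1), (-1 : ℤ) ^ (m + 1 - k) * #{T : Finset (Fin m) | S ⊆ T ∧ #T + 1 = k}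
      = ∑ k ∈ Icc 1 (m + 1), ∑ T ∈ {T : Finset (Fin m) | S ⊆ T} with #T + 1 = k,
          (-1 : ℤ) ^ #Tᶜ := by
        refine sum_congr rfl fun k _ => ?_
        rw [filter_filter, card_eq_sum_ones, Nat.cast_sum, mul_sum]
        refine sum_congr rfl fun T hT => ?_
        rw [mem_filter] at hT
        rw [card_compl, Fintype.card_fin, Nat.cast_one, mul_one]
        congr 1
        omega
    _ = ∑ T ∈ {T : Finset (Fin m) | S ⊆ T}, (-1 : ℤ) ^ #Tᶜ :=
        sum_fiberwise_of_maps_to (fun T _ => by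
          have := card_le_univ T
          simp only [Fintype.card_fin] at this
          simp only [mem_Icc]
          omega) _
    _ = ∑ U ∈ Sᶜ.powerset, (-1 : ℤ) ^ #U := by
        refine sum_nbij' compl compl ?_ ?_ ?_ ?_ ?_ <;> simp [subset_compl_comm]
    _ = if S = univ then 1 else 0 := by
        simp only [sum_powerset_neg_one_pow_card, compl_eq_empty_iff]

lemma alternating_sum_card_finerMonoSurjs {m i : ℕ} {e : Fin (m + 1) → Fin i}
    (he : e ∈ monoSurjs (m + 1) i) :
    ∑ k ∈ Icc 1 (m + 1), (-1 : ℤ) ^ (m + 1 - k) * #(finerMonoSurjs k e) =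
      if m + 1 = i then 1 else 0 := by
  simp_rw [card_finerMonoSurjs _ he, sum_neg_one_pow_card_supersets,
    ← card_eq_iff_eq_univ, Fintype.card_fin]
  have := card_cutSet_add_one he
  congr 1
  exact propext ⟨by omega, by omega⟩

lemma monoSurjs_self (n : ℕ) : monoSurjs n n = {id} := by
  ext c
  rw [mem_monoSurjs, mem_singleton]
  refine ⟨fun ⟨hm, hs⟩ => ?_, by rintro rfl; exact ⟨monotone_id, surjective_id⟩⟩
  have hb : Bijective c := ⟨Finite.injective_iff_surjective.mpr hs, hs⟩
  have := (Equiv.Perm.monotone_iff (Equiv.ofBijective c hb)).mp hm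
  exact congrArg DFunLike.coe this

theorem lah_biorthogonality_general
    {X : Type*} {i n : ℕ} (hn : 1 ≤ n)
    (f : (Fin n → X) → ℝ) (hf : IsSymmFun f) :
    ∀ y : Fin i → X,
      (∑ k ∈ Finset.Icc 1 n, (-1 : ℝ) ^ (n - k) * Lop k i (Lop n k f) y)
        = if h : n = i then castFun h f y else 0 := by
  intro y
  obtain ⟨m, rfl⟩ : ∃ m, n = m + 1 := ⟨n - 1, by omega⟩
  have hdelta (e) (he : e ∈ monoSurjs (m + 1) i) :
      ∑ k ∈ Icc 1 (m + 1), (-1 : ℝ) ^ (m + 1 - k) * #(finerMonoSurjs k e) =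
        if m + 1 = i then 1 else 0 := by
    exact_mod_cast alternating_sum_card_finerMonoSurjs he
  calc ∑ k ∈ Icc 1 (m + 1), (-1 : ℝ) ^ (m + 1 - k) * Lop k i (Lop (m + 1) k f) y
      = (m + 1).factorial * (∑ e ∈ monoSurjs (m + 1) i,
          (∑ k ∈ Icc 1 (m + 1), (-1 : ℝ) ^ (m + 1 - k) * #(finerMonoSurjs k e)) * f (y ∘ e)) /
          i.factorial := by
        simp only [Lop_Lop_eq_sum_finerMonoSurjs _ _ hf, sum_mul, mul_sum, sum_div]
        rw [sum_comm]
        refine sum_congr rfl fun e _ => sum_congr rfl fun k _ => by ring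
    _ = if h : m + 1 = i then castFun h f y else 0 := by
        rw [sum_congr rfl fun e he => by rw [hdelta e he]]
        split_ifs with h
        · subst h
          simp only [monoSurjs_self, sum_singleton, one_mul, comp_id]
          field_simp
          rfl
        · simp

/-- The Lah operators satisfy the biorthogonality identity
`Σ_{k=1}^{n} (−1)^{n−k} L(k,i) ∘ L(n,k) = δ_{ni} · Id` as operators from symmetric
functions on `X^n` to symmetric functions on `X^i`. -/
theorem lah_biorthogonality
    {X : Type*} [Fintype X] [DecidableEq X] {i n : ℕ} (hi : 1 ≤ i) (hn : 1 ≤ n)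
    (f : (Fin n → X) → ℝ) (hf : IsSymmFun f) :
    ∀ y : Fin i → X,
      (∑ k ∈ Finset.Icc 1 n, (-1 : ℝ) ^ (n - k) * Lop k i (Lop n k f) y)
        = if h : n = i then castFun h f y else 0 :=
  lah_biorthogonality_general hn f hf
end
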